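/- arXiv:2003.03830 — 4 statements merged into one kernel-verified Lean document; each statement's English description precedes it below -/
import Mathlib

section
/- Let p₁ = a/(2^k - 2^{l₁}·[l₁<k]) and p₂ = b/(2^k - 2^{l₂}·[l₂<k]) be fractions in reduced form with 0 ≤ l₁ < l₂ ≤ k and l₁ ≠ k-1, with p₁ + p₂ = 1 and 0 < p₁, p₂ < 1. Then a contradiction follows; i.e., no such pair exists. -/
/-- there is no pair of reduced fractions
`p₁ = a/(2^k - 2^{l₁}·[l₁<k])` and `p₂ = b/(2^k - 2^{l₂}·[l₂<k])` with
`0 ≤ l₁ < l₂ ≤ k`, `l₁ ≠ k-1`, `p₁ + p₂ = 1` and `0 < p₁, p₂ < 1`. -/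
theorem stmt_3 (k l₁ l₂ : ℕ) (a b : ℕ)
    (hl : l₁ < l₂) (hl₂ : l₂ ≤ k) (hne : l₁ ≠ k - 1)
    (c₁ : ℕ) (hc₁ : c₁ = 2 ^ k - (if l₁ < k then 2 ^ l₁ else 0))
    (c₂ : ℕ) (hc₂ : c₂ = 2 ^ k - (if l₂ < k then 2 ^ l₂ else 0))
    (hred₁ : Nat.gcd a c₁ = 1) (hred₂ : Nat.gcd b c₂ = 1)
    (p₁ p₂ : ℚ) (hp₁ : p₁ = (a : ℚ) / c₁) (hp₂ : p₂ = (b : ℚ) / c₂)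
    (hsum : p₁ + p₂ = 1)
    (h₁0 : 0 < p₁) (h₁1 : p₁ < 1) (h₂0 : 0 < p₂) (h₂1 : p₂ < 1) :
    False := by
  have hl₁k : l₁ < k := lt_of_lt_of_le hl hl₂
  have hp12 : (2:ℕ) ^ l₁ < 2 ^ l₂ := Nat.pow_lt_pow_right one_lt_two hl
  have hp1k : (2:ℕ) ^ l₁ < 2 ^ k := Nat.pow_lt_pow_right one_lt_two hl₁k
  have hp2k : (2:ℕ) ^ l₂ ≤ 2 ^ k := Nat.pow_le_pow_right (by norm_num) hl₂
  have hpos1 : 0 < (2:ℕ) ^ l₁ := Nat.pow_pos (by norm_num)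
  have hposk : 0 < (2:ℕ) ^ k := Nat.pow_pos (by norm_num)
  have hc₁pos : 0 < c₁ := by rw [hc₁, if_pos hl₁k]; omega
  have hc₂pos : 0 < c₂ := by
    rw [hc₂]; split
    · have : (2:ℕ) ^ l₂ < 2 ^ k := Nat.pow_lt_pow_right one_lt_two (by assumption)
      omega
    · omega
  have hc₁Q : (0:ℚ) < (c₁:ℚ) := by exact_mod_cast hc₁pos
  have hc₂Q : (0:ℚ) < (c₂:ℚ) := by exact_mod_cast hc₂pos
  have ha : a < c₁ := by
    rw [hp₁, div_lt_one hc₁Q] at h₁1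
    exact_mod_cast h₁1
  have hp₂' : p₂ = ((c₁ - a : ℕ) : ℚ) / c₁ := by
    have : p₂ = 1 - p₁ := by linarith
    rw [this, hp₁, Nat.cast_sub ha.le]
    field_simp
  have hco : Nat.Coprime (c₁ - a) c₁ := by
    have h1 : Nat.gcd (c₁ - a) a = Nat.gcd (c₁ - a) c₁ := by
      have h := Nat.gcd_sub_self_right (m := c₁ - a) (n := c₁) (by omega)
      rwa [show c₁ - (c₁ - a) = a by omega] at h
    have h2 : Nat.gcd (c₁ - a) a = Nat.gcd c₁ a := Nat.gcd_sub_self_left ha.le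
    unfold Nat.Coprime
    rw [← h1, h2, Nat.gcd_comm]; exact hred₁
  have key : ((c₁ - a : ℕ) : ℤ) = (b : ℤ) ∧ (c₁ : ℤ) = (c₂ : ℤ) := by
    apply Rat.div_int_inj (by exact_mod_cast hc₁pos) (by exact_mod_cast hc₂pos)
    · simpa using hco
    · simpa [Nat.gcd_comm] using hred₂
    · push_cast
      rw [← hp₂', hp₂]
  have hcc : c₁ = c₂ := by exact_mod_cast key.2
  rw [hc₁, hc₂, if_pos hl₁k] at hcc
  by_cases h : l₂ < k
  · rw [if_pos h] at hcc
    omega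
  · rw [if_neg h] at hcc
    omega
end

section
/- For any integers k ≥ 1 and m with 2^{k-1} < m < 2^k, we have log₂(2^k/m) < 1 and ((2^k - m)/m)·log₂(2^k/(2^k - m)) < 1, and both quantities are positive. -/
/-- for `k ≥ 1` and `2^{k-1} < m < 2^k`, both `log₂(2^k/m)` and
`((2^k-m)/m)·log₂(2^k/(2^k-m))` are strictly between `0` and `1`. -/
theorem stmt_13 (k m : ℕ) (hk : 1 ≤ k) (h₁ : 2 ^ (k - 1) < m) (h₂ : m < 2 ^ k) :
    (0 < Real.logb 2 ((2 : ℝ) ^ k / m) ∧ Real.logb 2 ((2 : ℝ) ^ k / m) < 1) ∧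
    (0 < (((2 : ℝ) ^ k - m) / m) * Real.logb 2 ((2 : ℝ) ^ k / ((2 : ℝ) ^ k - m)) ∧
      (((2 : ℝ) ^ k - m) / m) * Real.logb 2 ((2 : ℝ) ^ k / ((2 : ℝ) ^ k - m)) < 1) := by
  have hm0n : 0 < m := lt_of_le_of_lt (Nat.zero_le _) h₁
  have hm0 : (0:ℝ) < m := by exact_mod_cast hm0n
  have hM : (m:ℝ) < (2:ℝ)^k := by exact_mod_cast h₂
  have h2mn : 2 ^ k < 2 * m := by
    have : 2 ^ k = 2 * 2 ^ (k-1) := by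
      rw [← pow_succ']; congr 1; omega
    omega
  have h2m : (2:ℝ)^k < 2 * m := by exact_mod_cast h2mn
  set r : ℝ := (2:ℝ)^k - m with hr
  have hr0 : 0 < r := by simp [hr]; linarith
  have hrm : r < m := by simp [hr]; linarith
  have hlog2 : 0 < Real.log 2 := Real.log_pos one_lt_two
  constructor
  · constructor
    · exact Real.logb_pos one_lt_two ((one_lt_div hm0).mpr hM)
    · have hx2 : (2:ℝ)^k / m < 2 := (div_lt_iff₀ hm0).mpr (by linarith)
      calc Real.logb 2 ((2:ℝ)^k / m) < Real.logb 2 2 :=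
            Real.logb_lt_logb one_lt_two (by positivity) hx2
        _ = 1 := by simp [Real.logb_self_eq_one]
  · have hL0 : 0 < Real.logb 2 ((2:ℝ)^k / r) :=
      Real.logb_pos one_lt_two ((one_lt_div hr0).mpr (by linarith))
    constructor
    · positivity
    · have hsplit : Real.log ((2:ℝ)^k / r) = Real.log 2 + Real.log ((2:ℝ)^k/(2*r)) := by
        rw [← Real.log_mul two_ne_zero (by positivity)]
        congr 1
        field_simp
      have hlog_sub : Real.log ((2:ℝ)^k/(2*r)) ≤ (2:ℝ)^k/(2*r) - 1 :=
        Real.log_le_sub_one_of_pos (by positivity)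
      have hre : r * ((2:ℝ)^k/(2*r)) = (2:ℝ)^k/2 := by
        field_simp
      have hd9 : (0.6931471803 : ℝ) < Real.log 2 := Real.log_two_gt_d9
      have key : r * Real.log ((2:ℝ)^k / r) < m * Real.log 2 := by
        have h1 : r * Real.log ((2:ℝ)^k/(2*r)) ≤ r * ((2:ℝ)^k/(2*r) - 1) :=
          mul_le_mul_of_nonneg_left hlog_sub hr0.le
        rw [hsplit, mul_add]
        have hs : (0:ℝ) < 2 * m - (2:ℝ)^k := by linarith
        nlinarith [mul_lt_mul_of_pos_left hd9 hs, hre]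
      have heq : r / m * Real.logb 2 ((2:ℝ)^k / r)
          = (r * Real.log ((2:ℝ)^k / r)) / (m * Real.log 2) := by
        rw [Real.logb, div_mul_div_comm]
      rw [heq, div_lt_one (by positivity)]
      exact key
end

section
/- Let k ≥ 1 and 2^{k-1} < m < 2^k. Then log₂(2^k/m) + ((2^k - m)/m)·log₂(2^k/(2^k - m)) + (2^k/m)·t < 6 for any real t with 0 ≤ t < 2, and the sum is nonnegative. -/
/-!
Put `M = 2^k`, so that `m < M < 2m`. Then `M / m < 2` gives `log₂(M/m) < 1` and
`(M/m)·t < 4`. For the middle term write `s = M - m` and `x = m/s > 1`: it equals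
`log₂(x + 1) / x`, which is `< 1` by Bernoulli's inequality `x + 1 < 2^x`.
-/

open Real

lemma logb_two_add_one_lt_self {x : ℝ} (hx : 1 < x) : logb 2 (x + 1) < x := by
  rw [logb_lt_iff_lt_rpow one_lt_two (by linarith)]
  have := one_add_mul_self_lt_rpow_one_add (s := 1) (by norm_num) one_ne_zero hx
  norm_num at this
  linarith

section

variable {m M : ℝ}

lemma logb_two_div_lt_one (hM₀ : 0 < M) (hM : M < 2 * m) : logb 2 (M / m) < 1 := by
  have hm : 0 < m := by linarith
  rw [logb_lt_iff_lt_rpow one_lt_two (by positivity), rpow_one, div_lt_iff₀ hm]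
  exact hM

lemma sub_div_mul_logb_two_div_sub_lt_one (hmM : m < M) (hM : M < 2 * m) :
    (M - m) / m * logb 2 (M / (M - m)) < 1 := by
  have hs : 0 < M - m := sub_pos.2 hmM
  have hm : 0 < m := by linarith
  have hx : 1 < m / (M - m) := (one_lt_div hs).2 (by linarith)
  have hMs : M / (M - m) = m / (M - m) + 1 := by field_simp; ring
  rw [div_mul_eq_mul_div, div_lt_one hm, ← lt_div_iff₀' hs, hMs]
  exact logb_two_add_one_lt_self hx

end

theorem stmt_14_general (k m : ℕ) (h₁ : 2 ^ (k - 1) < m) (h₂ : m < 2 ^ k)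
    (t : ℝ) (ht₀ : 0 ≤ t) (ht₂ : t < 2) :
    0 ≤ Real.logb 2 ((2 : ℝ) ^ k / m) +
        (((2 : ℝ) ^ k - m) / m) * Real.logb 2 ((2 : ℝ) ^ k / ((2 : ℝ) ^ k - m)) +
        ((2 : ℝ) ^ k / m) * t ∧
    Real.logb 2 ((2 : ℝ) ^ k / m) +
        (((2 : ℝ) ^ k - m) / m) * Real.logb 2 ((2 : ℝ) ^ k / ((2 : ℝ) ^ k - m)) +
        ((2 : ℝ) ^ k / m) * t < 6 := by
  have hmM : (m : ℝ) < 2 ^ k := by exact_mod_cast h₂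
  have hM : (2 : ℝ) ^ k < 2 * m := by
    have : 2 ^ k ≤ 2 * 2 ^ (k - 1) := by
      rw [← pow_succ']; exact Nat.pow_le_pow_right two_pos (by omega)
    exact_mod_cast this.trans_lt (by omega)
  have hm : (0 : ℝ) < m := by linarith
  have hMm : (2 : ℝ) ^ k / m < 2 := (div_lt_iff₀ hm).2 hM
  have hA₀ : 0 ≤ logb 2 ((2 : ℝ) ^ k / m) :=
    logb_nonneg one_lt_two ((one_le_div hm).2 hmM.le)
  have hB₀ : 0 ≤ ((2 : ℝ) ^ k - m) / m * logb 2 ((2 : ℝ) ^ k / ((2 : ℝ) ^ k - m)) :=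
    mul_nonneg (div_nonneg (by linarith) hm.le)
      (logb_nonneg one_lt_two ((one_le_div (by linarith)).2 (by linarith)))
  have hC₀ : 0 ≤ (2 : ℝ) ^ k / m * t := mul_nonneg (by positivity) ht₀
  have hA := logb_two_div_lt_one (by positivity) hM
  have hB := sub_div_mul_logb_two_div_sub_lt_one hmM hM
  have hC : (2 : ℝ) ^ k / m * t ≤ 2 * t := mul_le_mul_of_nonneg_right hMm.le ht₀
  constructor <;> linarith

/-- total entropy gap bound for FLDR: for `k ≥ 1`, `2^{k-1} < m < 2^k`
and `0 ≤ t < 2`, the gap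
`log₂(2^k/m) + ((2^k-m)/m)·log₂(2^k/(2^k-m)) + (2^k/m)·t` is nonnegative and `< 6`. -/
theorem stmt_14 (k m : ℕ) (hk : 1 ≤ k) (h₁ : 2 ^ (k - 1) < m) (h₂ : m < 2 ^ k)
    (t : ℝ) (ht₀ : 0 ≤ t) (ht₂ : t < 2) :
    0 ≤ Real.logb 2 ((2 : ℝ) ^ k / m) +
        (((2 : ℝ) ^ k - m) / m) * Real.logb 2 ((2 : ℝ) ^ k / ((2 : ℝ) ^ k - m)) +
        ((2 : ℝ) ^ k / m) * t ∧
    Real.logb 2 ((2 : ℝ) ^ k / m) +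
        (((2 : ℝ) ^ k - m) / m) * Real.logb 2 ((2 : ℝ) ^ k / ((2 : ℝ) ^ k - m)) +
        ((2 : ℝ) ^ k / m) * t < 6 :=
  stmt_14_general k m h₁ h₂ t ht₀ ht₂
end

section
/- For a distribution p = (p₁,…,pₙ) with n > 1, the expected number of fair bits consumed by any DDG-tree sampler with output distribution p is at least H(p), the Shannon entropy of p. -/
/-!
A leaf of depth `d` labelled `i` has weight `2^{-d} ≤ pᵢ`, so `d ≥ log₂ (1 / pᵢ)`. Weighting
these inequalities by `2^{-d}` and summing over the leaves labelled `i` gives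
`pᵢ log₂ (1 / pᵢ) ≤ Σ d 2^{-d}`; summing over `i` gives the bound. The comparison is made
in `ℝ≥0∞`, where every sum is meaningful.
-/

open scoped ENNReal

theorem ENNReal.ofReal_tsum_mul_logb_inv_le {ι : Type*} (w : ι → ℝ) (hw : ∀ a, 0 < w a) :
    ENNReal.ofReal ((∑' a, w a) * Real.logb 2 (∑' a, w a)⁻¹) ≤
      ∑' a, ENNReal.ofReal (w a * Real.logb 2 (w a)⁻¹) := by
  by_cases hs : Summable w
  swap
  · simp [tsum_eq_zero_of_not_summable hs]
  set c := Real.logb 2 (∑' a, w a)⁻¹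
  have hle : ∀ a, w a ≤ ∑' a, w a := fun a => hs.le_tsum a fun b _ => (hw b).le
  rcases lt_or_ge c 0 with hc | hc
  · have hneg : (∑' a, w a) * c ≤ 0 :=
      mul_nonpos_of_nonneg_of_nonpos (tsum_nonneg fun a => (hw a).le) hc.le
    simp [ENNReal.ofReal_of_nonpos hneg]
  calc ENNReal.ofReal ((∑' a, w a) * c)
      = ENNReal.ofReal (∑' a, w a * c) := by rw [tsum_mul_right]
    _ = ∑' a, ENNReal.ofReal (w a * c) :=
      ENNReal.ofReal_tsum_of_nonneg (fun a => mul_nonneg (hw a).le hc) (hs.mul_right c)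
    _ ≤ ∑' a, ENNReal.ofReal (w a * Real.logb 2 (w a)⁻¹) := by
      refine ENNReal.tsum_le_tsum fun a => ENNReal.ofReal_le_ofReal ?_
      refine mul_le_mul_of_nonneg_left ?_ (hw a).le
      exact Real.logb_le_logb_of_le _root_.one_lt_two (inv_pos.2 ((hw a).trans_le (hle a)))
        (inv_anti₀ (hw a) (hle a))

theorem tsum_isSome_eq_sum_tsum_eq_some {α β : Type*} [Fintype β] (g : α → Option β)
    (f : α → ℝ≥0∞) :
    ∑' a : {a // (g a).isSome}, f a = ∑ b, ∑' a : {a // g a = some b}, f a := by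
  rw [← (Equiv.sigmaSubtypeFiberEquivSubtype g (q := (·.isSome)) fun _ => Iff.rfl).tsum_eq,
    ENNReal.tsum_sigma', ← (Equiv.optionIsSomeEquiv β).symm.tsum_eq, tsum_fintype]
  rfl

theorem ENNReal.ofReal_half_pow_mul_logb_inv (k : ℕ) :
    ENNReal.ofReal ((1 / 2 : ℝ) ^ k * Real.logb 2 ((1 / 2 : ℝ) ^ k)⁻¹) =
      k * (1 / 2 : ℝ≥0∞) ^ k := by
  rw [one_div, one_div, inv_pow, ← ENNReal.inv_pow, inv_inv, Real.logb_pow,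
    Real.logb_self_eq_one _root_.one_lt_two, mul_one, mul_comm,
    ENNReal.ofReal_mul (Nat.cast_nonneg k), ENNReal.ofReal_natCast,
    ENNReal.ofReal_inv_of_pos (by positivity), ENNReal.ofReal_pow zero_le_two, ENNReal.ofReal_ofNat]

theorem stmt_18_general (n : ℕ) (leafSet : List Bool → Option (Fin n)) :
    let p : Fin n → ℝ := fun i =>
      ∑' s : {s : List Bool // leafSet s = some i}, ((1 : ℝ) / 2) ^ (s.1.length)
    ENNReal.ofReal (∑ i : Fin n, p i * Real.logb 2 (p i)⁻¹) ≤
      ∑' s : {s : List Bool // (leafSet s).isSome},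
        (s.1.length : ℝ≥0∞) * ((1 : ℝ≥0∞) / 2) ^ (s.1.length) := by
  intro p
  calc ENNReal.ofReal (∑ i, p i * Real.logb 2 (p i)⁻¹)
      ≤ ∑ i, ENNReal.ofReal (p i * Real.logb 2 (p i)⁻¹) :=
        Finset.le_sum_of_subadditive _ ENNReal.ofReal_zero.le
          (fun _ _ => ENNReal.ofReal_add_le) _ _
    _ ≤ ∑ i, ∑' s : {s : List Bool // leafSet s = some i},
          ENNReal.ofReal
            ((1 / 2 : ℝ) ^ s.1.length * Real.logb 2 ((1 / 2 : ℝ) ^ s.1.length)⁻¹) :=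
        Finset.sum_le_sum fun i _ =>
          ENNReal.ofReal_tsum_mul_logb_inv_le _ fun _ => by positivity
    _ = ∑ i, ∑' s : {s : List Bool // leafSet s = some i},
          (s.1.length : ℝ≥0∞) * (1 / 2 : ℝ≥0∞) ^ s.1.length := by
        simp only [ENNReal.ofReal_half_pow_mul_logb_inv]
    _ = _ :=
        (tsum_isSome_eq_sum_tsum_eq_some leafSet fun s => s.length * (1 / 2) ^ s.length).symm

/-- entropy lower bound for DDG-tree samplers. A (possibly infinite)
DDG tree over outcomes `{1,…,n}` is represented by its set of leaves: a prefix-free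
assignment `leafSet : List Bool → Option (Fin n)` marking which nodes (bit-string
paths from the root) are leaves and the outcome labeling each. If the random walk
driven by fair bits halts at a leaf with probability one, then the expected number
of consumed bits `E[L_T] = Σ_leaves depth·2^{-depth}` is at least the Shannon
entropy `H(p) = Σᵢ pᵢ log₂(1/pᵢ)` of the output distribution
`pᵢ = Σ_{leaves labeled i} 2^{-depth}`. -/
theorem stmt_18 (n : ℕ) (hn : 1 < n) (leafSet : List Bool → Option (Fin n))
    (hprefix : ∀ s t : List Bool, (leafSet s).isSome → s <+: t → s ≠ t →
      leafSet t = none)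
    (hhalt : (∑' s : {s : List Bool // (leafSet s).isSome},
      ((1 : ℝ) / 2) ^ (s.1.length)) = 1) :
    let p : Fin n → ℝ := fun i =>
      ∑' s : {s : List Bool // leafSet s = some i}, ((1 : ℝ) / 2) ^ (s.1.length)
    ENNReal.ofReal (∑ i : Fin n, p i * Real.logb 2 (p i)⁻¹) ≤
      ∑' s : {s : List Bool // (leafSet s).isSome},
        (s.1.length : ℝ≥0∞) * ((1 : ℝ≥0∞) / 2) ^ (s.1.length) :=
  stmt_18_general n leafSet
end
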